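/- arXiv:1905.06411 — 3 statements merged into one kernel-verified Lean document; each statement's English description precedes it below -/
import Mathlib

section
/- Ewens sampling formula: for a sample $X_1,\dots,X_n$ from the generalized Pólya urn scheme with precision $\alpha > 0$ and atomless base distribution, the probability that the induced partition has $v_j$ blocks of size $j$ for each $j$ (where $\sum_j j v_j = n$) is $\frac{n!}{\alpha(\alpha+1)\cdots(\alpha+n-1)} \prod_{j=1}^n \frac{\alpha^{v_j}}{j^{v_j} v_j!}$. -/
open MeasureTheory ProbabilityTheory

/-- One predictive step of the generalized Pólya urn (Blackwell–MacQueen) scheme: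
given previous values `x`, the next value is drawn from
`α/(α+n) • G0 + 1/(α+n) • ∑ δ_{x i}`. -/
noncomputable def polyaStep (α : ℝ) (G0 : MeasureTheory.Measure ℝ) {n : ℕ} (x : Fin n → ℝ) :
    MeasureTheory.Measure ℝ :=
  ENNReal.ofReal (α / (α + n)) • G0
    + ENNReal.ofReal (1 / (α + n)) • ∑ i : Fin n, MeasureTheory.Measure.dirac (x i)

/-- Joint law of the first `n` draws of the generalized Pólya urn scheme. -/
noncomputable def polyaLaw (α : ℝ) (G0 : MeasureTheory.Measure ℝ) :
    (n : ℕ) → MeasureTheory.Measure (Fin n → ℝ)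
  | 0 => MeasureTheory.Measure.dirac Fin.elim0
  | n + 1 => (polyaLaw α G0 n).bind (fun x => (polyaStep α G0 x).map (Fin.snoc x))

/-- Number of distinct values among `x 1, …, x n` that are repeated exactly
`j` times (i.e. blocks of size `j` of the induced partition). -/
noncomputable def blocksOfSize {n : ℕ} (x : Fin n → ℝ) (j : ℕ) : ℕ :=
  Set.ncard {r : ℝ | (∃ i, x i = r) ∧ Set.ncard {i | x i = r} = j}


/-!
Record the partition induced by `x : Fin n → ℝ` through the multiset `t` of its block sizes.
One urn step turns `t` into `1 ::ₘ t` with probability `α / (α + n)` (the base measure is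
atomless, so the new value is a.s. fresh), and into `(c + 1) ::ₘ t.erase c` with probability
`c * t.count c / (α + n)` (the new value repeats one of the `c * t.count c` earlier values lying
in blocks of size `c`). Read backwards, the probability of `s` after `n + 1` draws is a
combination of the probabilities of `s.erase 1` and of `j ::ₘ s.erase (j + 1)` after `n` draws.
The Ewens weight `W` satisfies `k * (k ::ₘ u).count k * W (k ::ₘ u) = α * W u`, so each
predecessor contributes `b * s.count b / (α + n)` times the formula at `s`, and these
coefficients add up to `(n + 1) / (α + n)` because `∑ b, b * s.count b = n + 1`.
-/

open Finset
open scoped ENNReal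

lemma Multiset.cons_eq_iff_mem_and_eq_erase {α : Type*} [DecidableEq α] {a : α}
    {t s : Multiset α} : a ::ₘ t = s ↔ a ∈ s ∧ t = s.erase a := by
  constructor
  · rintro rfl
    exact ⟨Multiset.mem_cons_self a t, (Multiset.erase_cons_head a t).symm⟩
  · rintro ⟨ha, rfl⟩
    exact Multiset.cons_erase ha

lemma Multiset.count_mul_ite_cons_erase_eq {α : Type*} [DecidableEq α] {a b : α} (hab : a ≠ b)
    (t s : Multiset α) :
    t.count a * (if b ::ₘ t.erase a = s then 1 else 0)
      = if b ∈ s ∧ t = a ::ₘ s.erase b then s.count a + 1 else 0 := by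
  by_cases h : b ∈ s ∧ t = a ::ₘ s.erase b
  · obtain ⟨hb, rfl⟩ := h
    rw [if_pos (by rw [Multiset.erase_cons_head, Multiset.cons_erase hb]), if_pos ⟨hb, rfl⟩,
      Multiset.count_cons_self, Multiset.count_erase_of_ne hab, mul_one]
  · rw [if_neg h]
    by_cases hs : b ::ₘ t.erase a = s
    · have ha : a ∉ t := fun ha => h ⟨hs ▸ Multiset.mem_cons_self b _,
        by rw [← hs, Multiset.erase_cons_head, Multiset.cons_erase ha]⟩
      rw [Multiset.count_eq_zero.2 ha, zero_mul]
    · rw [if_neg hs, mul_zero]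

lemma Multiset.count_finset_sum_replicate {ι : Type*} [DecidableEq ι] (S : Finset ι)
    (v : ι → ℕ) (j : ι) :
    (∑ i ∈ S, Multiset.replicate (v i) i).count j = if j ∈ S then v j else 0 := by
  simp [Multiset.count_sum', Multiset.count_replicate]

lemma Multiset.count_one_add_sum_count_succ {s : Multiset ℕ} {n : ℕ} (hs0 : 0 ∉ s)
    (hsn : s.sum = n + 1) :
    s.count 1 + ∑ j ∈ Finset.Icc 1 n, (j + 1) * s.count (j + 1) = n + 1 := by
  have hsub : s.toFinset ⊆ Finset.Icc 1 (n + 1) := fun b hb => by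
    rw [Multiset.mem_toFinset] at hb
    have := Multiset.le_sum_of_mem hb
    exact Finset.mem_Icc.2 ⟨Nat.pos_of_ne_zero (ne_of_mem_of_not_mem hb hs0), hsn ▸ this⟩
  rw [← hsn, Finset.sum_multiset_count_of_subset s _ hsub,
    ← insert_Icc_add_one_left_eq_Icc (by omega : 1 ≤ n + 1), sum_insert (by simp),
    ← image_add_right_Icc, sum_image (by simp)]
  simp [mul_comm]

noncomputable def blockSizes {β : Type*} [DecidableEq β] {n : ℕ} (x : Fin n → β) :
    Multiset ℕ :=
  (univ.image x).val.map fun r => #{i | x i = r}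

section BlockSizes

variable {β : Type*} [DecidableEq β] {n : ℕ}

lemma count_blockSizes (x : Fin n → ℝ) (j : ℕ) :
    (blockSizes x).count j = blocksOfSize x j := by
  rw [blockSizes, Multiset.count_map, blocksOfSize, ← Finset.filter_val, Finset.card_val,
    ← Set.ncard_coe_finset]
  congr 1
  ext r
  simp [eq_comm, ← Set.ncard_coe_finset]

lemma mem_blockSizes {x : Fin n → β} {b : ℕ} (hb : b ∈ blockSizes x) : b ∈ Icc 1 n := by
  obtain ⟨r, hr, rfl⟩ := Multiset.mem_map.1 hb
  obtain ⟨i, -, rfl⟩ := Finset.mem_image.1 (Finset.mem_def.2 hr)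
  exact Finset.mem_Icc.2
    ⟨Finset.card_pos.2 ⟨i, by simp⟩, (card_filter_le _ _).trans (by simp)⟩

lemma sum_blockSizes_eq {M : Type*} [AddCommMonoid M] (x : Fin n → β) (h : ℕ → M) :
    ∑ i, h #{k | x k = x i} = ((blockSizes x).map fun b => b • h b).sum := by
  rw [Finset.sum_comp (fun r => h #{k | x k = r}) x, blockSizes, Multiset.map_map]
  rfl

lemma card_filter_snoc_eq (x : Fin n → β) (y r : β) :
    #{i | (Fin.snoc x y : Fin (n + 1) → β) i = r} = #{i | x i = r} + if y = r then 1 else 0 := by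
  simp only [card_filter, Fin.sum_univ_castSucc, Fin.snoc_castSucc, Fin.snoc_last]

lemma image_univ_snoc (x : Fin n → β) (y : β) :
    univ.image (Fin.snoc x y : Fin (n + 1) → β) = insert y (univ.image x) := by
  ext r
  simp [Fin.exists_fin_succ', eq_comm, or_comm]

lemma blockSizes_snoc_of_notMem {x : Fin n → β} {y : β} (hy : y ∉ Set.range x) :
    blockSizes (Fin.snoc x y : Fin (n + 1) → β) = 1 ::ₘ blockSizes x := by
  have hy' : y ∉ univ.image x := by simpa using hy
  rw [blockSizes, image_univ_snoc, Finset.insert_val_of_notMem hy', Multiset.map_cons,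
    blockSizes, card_filter_snoc_eq, if_pos rfl]
  congr 1
  · simpa [Finset.card_eq_zero] using hy
  · refine Multiset.map_congr rfl fun r hr => ?_
    rw [card_filter_snoc_eq, if_neg (ne_of_mem_of_not_mem (Finset.mem_def.2 hr) hy').symm,
      add_zero]

lemma blockSizes_snoc_apply (x : Fin n → β) (i : Fin n) :
    blockSizes (Fin.snoc x (x i) : Fin (n + 1) → β)
      = (#{k | x k = x i} + 1) ::ₘ (blockSizes x).erase #{k | x k = x i} := by
  set R := univ.image x
  have hmem : x i ∈ R := mem_image_of_mem x (mem_univ i)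
  have hval : R.val = x i ::ₘ (R.erase (x i)).val := by
    rw [← Finset.insert_val_of_notMem (notMem_erase _ _), insert_erase hmem]
  have hrest :
      (R.erase (x i)).val.map (fun r => #{k | (Fin.snoc x (x i) : Fin (n + 1) → β) k = r})
        = (R.erase (x i)).val.map fun r => #{k | x k = r} :=
    Multiset.map_congr rfl fun r hr => by
      rw [card_filter_snoc_eq, if_neg (ne_of_mem_erase (Finset.mem_def.2 hr)).symm, add_zero]
  rw [blockSizes, blockSizes, image_univ_snoc, insert_eq_of_mem hmem, hval, Multiset.map_cons,
    Multiset.map_cons, hrest, card_filter_snoc_eq, if_pos rfl, Multiset.erase_cons_head]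

lemma card_blockSizes_snoc_apply_eq (x : Fin n → β) (s : Multiset ℕ) :
    #{i | blockSizes (Fin.snoc x (x i) : Fin (n + 1) → β) = s}
      = ∑ j ∈ Icc 1 n, if j + 1 ∈ s ∧ blockSizes x = j ::ₘ s.erase (j + 1)
          then j * (s.count j + 1) else 0 := by
  simp_rw [card_filter, blockSizes_snoc_apply]
  rw [sum_blockSizes_eq x fun c => if (c + 1) ::ₘ (blockSizes x).erase c = s then 1 else 0,
    Finset.sum_multiset_map_count, Finset.sum_subset (fun b hb => mem_blockSizes
      (Multiset.mem_toFinset.1 hb))]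
  · refine Finset.sum_congr rfl fun j hj => ?_
    rw [smul_eq_mul, smul_eq_mul, ← mul_assoc, mul_comm _ j, mul_assoc,
      Multiset.count_mul_ite_cons_erase_eq (Nat.ne_of_lt j.lt_succ_self), mul_ite, mul_zero]
  · intro b _ hb
    rw [Multiset.count_eq_zero.2 (mt Multiset.mem_toFinset.2 hb), zero_smul]

lemma setOf_blocksOfSize_eq_preimage_blockSizes (v : ℕ → ℕ) :
    {x : Fin n → ℝ | ∀ j ∈ Icc 1 n, blocksOfSize x j = v j}
      = blockSizes ⁻¹' {∑ j ∈ Icc 1 n, Multiset.replicate (v j) j} := by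
  ext x
  simp only [Set.mem_ofPred_eq, Set.mem_preimage, Set.mem_singleton_iff, Multiset.ext,
    ← count_blockSizes, Multiset.count_finset_sum_replicate]
  refine ⟨fun h j => ?_, fun h j hj => by simpa [hj] using h j⟩
  split_ifs with hj
  · exact h j hj
  · exact Multiset.count_eq_zero.2 fun hm => hj (mem_blockSizes hm)

variable [MeasurableSpace β] [MeasurableEq β]

lemma measurable_count_blockSizes (j : ℕ) :
    Measurable fun x : Fin n → β => (blockSizes x).count j := by
  -- `j * count j` counts the indices lying in blocks of size `j`; for `j = 0` both sides are 0,
  -- the right one because `m / 0 = 0` in `ℕ`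
  have hcount : ∀ x : Fin n → β, (blockSizes x).count j = #{i | #{k | x k = x i} = j} / j := by
    intro x
    have hsum : ((blockSizes x).map fun b => b • if b = j then 1 else 0).sum
        = j * (blockSizes x).count j := by
      rw [Finset.sum_multiset_map_count]
      simp only [smul_eq_mul, mul_ite, mul_one, mul_zero, Finset.sum_ite_eq',
        Multiset.mem_toFinset]
      split_ifs with h
      · ring
      · simp [Multiset.count_eq_zero.2 h]
    rw [card_filter, sum_blockSizes_eq x fun b => if b = j then 1 else 0, hsum]
    rcases Nat.eq_zero_or_pos j with rfl | hj
    · rw [Nat.div_zero]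
      exact Multiset.count_eq_zero.2 fun h => by simpa using mem_blockSizes h
    · rw [Nat.mul_div_cancel_left _ hj]
  have hcard : Measurable fun x : Fin n → β => #{i | #{k | x k = x i} = j} := by
    simp only [card_filter]
    refine Finset.measurable_sum _ fun i _ => Measurable.ite ?_ measurable_const measurable_const
    refine measurableSet_eq_fun (Finset.measurable_sum _ fun k _ =>
      Measurable.ite ?_ measurable_const measurable_const) measurable_const
    exact measurableSet_eq_fun (measurable_pi_apply k) (measurable_pi_apply i)
  simp_rw [hcount]
  exact (measurable_from_nat (f := (· / j))).comp hcard

lemma measurableSet_blockSizes_preimage (S : Set (Multiset ℕ)) :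
    MeasurableSet (blockSizes ⁻¹' S : Set (Fin n → β)) := by
  have hfiber : ∀ s, MeasurableSet (blockSizes ⁻¹' {s} : Set (Fin n → β)) := by
    intro s
    have : (blockSizes ⁻¹' {s} : Set (Fin n → β))
        = ⋂ j, {x | (blockSizes x).count j = s.count j} := by
      ext x
      simpa using Multiset.ext
    rw [this]
    exact MeasurableSet.iInter fun j => measurableSet_eq_fun (measurable_count_blockSizes j)
      measurable_const
  rw [← Set.biUnion_preimage_singleton]
  exact MeasurableSet.biUnion S.to_countable fun s _ => hfiber s

end BlockSizes

section PolyaKernel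

variable {n : ℕ}

lemma measurable_snoc {β : Type*} [MeasurableSpace β] :
    Measurable fun p : (Fin n → β) × β => (Fin.snoc p.1 p.2 : Fin (n + 1) → β) := by
  refine measurable_pi_lambda _ fun i => ?_
  induction i using Fin.lastCases with
  | last => simpa using measurable_snd
  | cast i =>
    simp only [Fin.snoc_castSucc]
    exact (measurable_pi_apply i).comp measurable_fst

lemma measurable_snoc_right {β : Type*} [MeasurableSpace β] (x : Fin n → β) :
    Measurable (Fin.snoc (α := fun _ => β) x) :=
  measurable_snoc.comp (measurable_const.prodMk measurable_id)

lemma polyaStep_apply (α : ℝ) (G0 : Measure ℝ) (x : Fin n → ℝ) {s : Set ℝ}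
    (hs : MeasurableSet s) :
    polyaStep α G0 x s
      = ENNReal.ofReal (α / (α + n)) * G0 s
        + ENNReal.ofReal (1 / (α + n)) * ∑ i, s.indicator 1 (x i) := by
  simp [polyaStep, Measure.dirac_apply' _ hs]

lemma measurable_map_snoc_polyaStep (α : ℝ) (G0 : Measure ℝ) [SFinite G0] :
    Measurable fun x : Fin n → ℝ =>
      (polyaStep α G0 x).map (Fin.snoc (α := fun _ => ℝ) x) := by
  refine Measure.measurable_of_measurable_coe _ fun S hS => ?_
  simp_rw [Measure.map_apply (measurable_snoc_right _) hS,
    polyaStep_apply α G0 _ (measurable_snoc_right _ hS)]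
  refine ((measurable_measure_prodMk_left (measurable_snoc hS)).const_mul _).add
    ((Finset.measurable_sum _ fun i _ => measurable_one.indicator ?_).const_mul _)
  exact measurable_snoc.comp (measurable_id.prodMk (measurable_pi_apply i)) hS

lemma measure_snoc_preimage_blockSizes (G0 : Measure ℝ) [IsProbabilityMeasure G0]
    [NullSingletonClass G0] (x : Fin n → ℝ) (s : Multiset ℕ) :
    G0 (Fin.snoc (α := fun _ => ℝ) x ⁻¹' (blockSizes ⁻¹' {s}))
      = if 1 ::ₘ blockSizes x = s then 1 else 0 := by
  have hfresh : (Fin.snoc (α := fun _ => ℝ) x ⁻¹' (blockSizes ⁻¹' {s}))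
      =ᵐ[G0] {_y | 1 ::ₘ blockSizes x = s} := by
    filter_upwards [(Set.finite_range x).countable.ae_notMem G0] with y hy
    change (blockSizes (Fin.snoc x y : Fin (n + 1) → ℝ) = s) = (1 ::ₘ blockSizes x = s)
    rw [blockSizes_snoc_of_notMem hy]
  rw [measure_congr hfresh]
  split_ifs with h <;> simp [h]

lemma map_snoc_polyaStep_blockSizes_preimage (α : ℝ) (G0 : Measure ℝ) [IsProbabilityMeasure G0]
    [NullSingletonClass G0] (x : Fin n → ℝ) (s : Multiset ℕ) :
    (polyaStep α G0 x).map (Fin.snoc (α := fun _ => ℝ) x) (blockSizes ⁻¹' {s})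
      = (blockSizes ⁻¹' {t | 1 ∈ s ∧ t = s.erase 1}).indicator
          (fun _ => ENNReal.ofReal (α / (α + n))) x
        + ∑ j ∈ Icc 1 n,
          (blockSizes ⁻¹' {t | j + 1 ∈ s ∧ t = j ::ₘ s.erase (j + 1)}).indicator
            (fun _ => ENNReal.ofReal (1 / (α + n)) * (j * (s.count j + 1) : ℕ)) x := by
  have hS := measurableSet_blockSizes_preimage (β := ℝ) (n := n + 1) {s}
  rw [Measure.map_apply (measurable_snoc_right x) hS,
    polyaStep_apply α G0 x (measurable_snoc_right x hS), measure_snoc_preimage_blockSizes]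
  have hjoin :
      ∑ i, (Fin.snoc (α := fun _ => ℝ) x ⁻¹' (blockSizes ⁻¹' {s})).indicator 1 (x i)
        = (#{i | blockSizes (Fin.snoc x (x i) : Fin (n + 1) → ℝ) = s} : ℝ≥0∞) := by
    rw [← Finset.sum_boole]
    refine Finset.sum_congr rfl fun i _ => ?_
    classical
    rw [Set.indicator_apply]
    simp only [Set.mem_preimage, Set.mem_singleton_iff, Pi.one_apply]
  rw [hjoin, card_blockSizes_snoc_apply_eq, Nat.cast_sum, Finset.mul_sum]
  congr 1
  · simp [Set.indicator_apply, Multiset.cons_eq_iff_mem_and_eq_erase]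
  · refine Finset.sum_congr rfl fun j _ => ?_
    simp [Set.indicator_apply]

lemma polyaLaw_succ_blockSizes_preimage (α : ℝ) (G0 : Measure ℝ) [IsProbabilityMeasure G0]
    [NullSingletonClass G0] (n : ℕ) (s : Multiset ℕ) :
    polyaLaw α G0 (n + 1) (blockSizes ⁻¹' {s})
      = ENNReal.ofReal (α / (α + n))
          * polyaLaw α G0 n (blockSizes ⁻¹' {t | 1 ∈ s ∧ t = s.erase 1})
        + ∑ j ∈ Icc 1 n, ENNReal.ofReal (1 / (α + n)) * (j * (s.count j + 1) : ℕ)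
          * polyaLaw α G0 n
              (blockSizes ⁻¹' {t | j + 1 ∈ s ∧ t = j ::ₘ s.erase (j + 1)}) := by
  rw [polyaLaw, Measure.bind_apply (measurableSet_blockSizes_preimage _)
    (measurable_map_snoc_polyaStep α G0).aemeasurable]
  simp_rw [map_snoc_polyaStep_blockSizes_preimage]
  rw [lintegral_add_left (measurable_const.indicator (measurableSet_blockSizes_preimage _)),
    lintegral_finsetSum _ fun j _ =>
      measurable_const.indicator (measurableSet_blockSizes_preimage _)]
  simp_rw [lintegral_indicator_const (measurableSet_blockSizes_preimage _)]

end PolyaKernel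

open Nat in
noncomputable def ewensWeight (α : ℝ) (s : Multiset ℕ) : ℝ :=
  ∏ j ∈ s.toFinset, α ^ s.count j / ((j : ℝ) ^ s.count j * (s.count j)!)

open Nat in
noncomputable def ewensFormula (α : ℝ) (n : ℕ) (s : Multiset ℕ) : ℝ :=
  n ! / (∏ i ∈ range n, (α + i)) * ewensWeight α s

section EwensFormula

open Nat

variable (α : ℝ)

lemma ewensWeight_eq_prod_of_subset {s : Multiset ℕ} {S : Finset ℕ} (hS : s.toFinset ⊆ S) :
    ewensWeight α s = ∏ j ∈ S, α ^ s.count j / ((j : ℝ) ^ s.count j * (s.count j)!) :=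
  Finset.prod_subset hS fun j _ hj => by
    simp [Multiset.count_eq_zero.2 (mt Multiset.mem_toFinset.2 hj)]

lemma mul_ewensWeight_cons {k : ℕ} (hk : k ≠ 0) (u : Multiset ℕ) :
    ((k * (k ::ₘ u).count k : ℕ) : ℝ) * ewensWeight α (k ::ₘ u)
      = α * ewensWeight α u := by
  set S := (k ::ₘ u).toFinset
  have hkS : k ∈ S := by simp [S]
  have huS : u.toFinset ⊆ S := by
    intro j hj
    simp only [S, Multiset.mem_toFinset] at hj ⊢
    exact Multiset.mem_cons_of_mem hj
  rw [ewensWeight_eq_prod_of_subset α subset_rfl, ewensWeight_eq_prod_of_subset α huS,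
    ← Finset.mul_prod_erase _ _ hkS, ← Finset.mul_prod_erase _ _ hkS,
    Finset.prod_congr rfl fun j hj => by rw [Multiset.count_cons_of_ne (ne_of_mem_erase hj)],
    Multiset.count_cons_self]
  have hk' : (k : ℝ) ≠ 0 := Nat.cast_ne_zero.2 hk
  push_cast [factorial_succ, pow_succ]
  field_simp

lemma mul_ewensFormula_cons (n : ℕ) {k : ℕ} (hk : k ≠ 0) (u : Multiset ℕ) :
    ((k * (k ::ₘ u).count k : ℕ) : ℝ) * ewensFormula α n (k ::ₘ u)
      = α * ewensFormula α n u := by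
  unfold ewensFormula
  linear_combination (n ! / ∏ i ∈ range n, (α + i)) * mul_ewensWeight_cons α hk u

lemma ewensFormula_succ (n : ℕ) (s : Multiset ℕ) :
    ewensFormula α (n + 1) s = (n + 1) / (α + n) * ewensFormula α n s := by
  rw [ewensFormula, ewensFormula, factorial_succ, prod_range_succ, Nat.cast_mul,
    mul_comm (∏ i ∈ range n, (α + i)), mul_div_mul_comm]
  push_cast
  ring

lemma ewensFormula_nonneg {α : ℝ} (hα : 0 ≤ α) (n : ℕ) (s : Multiset ℕ) :
    0 ≤ ewensFormula α n s := by
  unfold ewensFormula ewensWeight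
  positivity

end EwensFormula

section Recursion

variable {α : ℝ} (hα : 0 < α) (G0 : Measure ℝ) {n : ℕ}
  (ih : ∀ {u : Multiset ℕ}, 0 ∉ u → u.sum = n →
    polyaLaw α G0 n (blockSizes ⁻¹' {u}) = ENNReal.ofReal (ewensFormula α n u))
  {s : Multiset ℕ} (hs0 : 0 ∉ s) (hsn : s.sum = n + 1)
include hα ih hs0 hsn

lemma polyaLaw_fresh_contribution :
    ENNReal.ofReal (α / (α + n))
        * polyaLaw α G0 n (blockSizes ⁻¹' {t | 1 ∈ s ∧ t = s.erase 1})
      = ENNReal.ofReal ((1 * s.count 1 : ℕ) * ewensFormula α n s / (α + n)) := by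
  by_cases h1 : 1 ∈ s
  · obtain ⟨u, rfl⟩ := Multiset.exists_cons_of_mem h1
    have hu : {t | 1 ∈ 1 ::ₘ u ∧ t = (1 ::ₘ u).erase 1} = {u} := by ext; simp
    rw [hu, ih (fun h => hs0 (Multiset.mem_cons_of_mem h)) (by simpa [add_comm] using hsn),
      ← ENNReal.ofReal_mul (by positivity), mul_ewensFormula_cons α n one_ne_zero u]
    ring_nf
  · have h : {t | 1 ∈ s ∧ t = s.erase 1} = ∅ := by simp [h1]
    simp [h, Multiset.count_eq_zero.2 h1]

lemma polyaLaw_join_contribution {j : ℕ} (hj : j ≠ 0) :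
    ENNReal.ofReal (1 / (α + n)) * ((j * (s.count j + 1) : ℕ) : ℝ≥0∞)
        * polyaLaw α G0 n (blockSizes ⁻¹' {t | j + 1 ∈ s ∧ t = j ::ₘ s.erase (j + 1)})
      = ENNReal.ofReal (((j + 1) * s.count (j + 1) : ℕ) * ewensFormula α n s / (α + n)) := by
  by_cases hj1 : j + 1 ∈ s
  · obtain ⟨u, rfl⟩ := Multiset.exists_cons_of_mem hj1
    have hu : {t | j + 1 ∈ (j + 1) ::ₘ u ∧ t = j ::ₘ ((j + 1) ::ₘ u).erase (j + 1)}
        = {j ::ₘ u} := by ext; simp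
    have hu0 : 0 ∉ j ::ₘ u := by
      simpa [Multiset.mem_cons, Ne.symm hj] using fun h => hs0 (Multiset.mem_cons_of_mem h)
    have hαn : 0 < α + n := by positivity
    rw [hu, ih hu0 (by simp at hsn ⊢; omega),
      Multiset.count_cons_of_ne (Nat.ne_of_lt j.lt_succ_self), ← Multiset.count_cons_self,
      ← ENNReal.ofReal_natCast, ← ENNReal.ofReal_mul (by positivity),
      ← ENNReal.ofReal_mul (by positivity), mul_assoc, mul_ewensFormula_cons α n hj,
      mul_ewensFormula_cons α n j.succ_ne_zero]
    ring_nf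
  · have h : {t | j + 1 ∈ s ∧ t = j ::ₘ s.erase (j + 1)} = ∅ := by simp [hj1]
    simp [h, Multiset.count_eq_zero.2 hj1]

end Recursion

theorem polyaLaw_blockSizes_preimage {α : ℝ} (hα : 0 < α) (G0 : Measure ℝ)
    [IsProbabilityMeasure G0] [NullSingletonClass G0] (n : ℕ) {s : Multiset ℕ} (hs0 : 0 ∉ s)
    (hsn : s.sum = n) :
    polyaLaw α G0 n (blockSizes ⁻¹' {s}) = ENNReal.ofReal (ewensFormula α n s) := by
  induction n generalizing s with
  | zero =>
    obtain rfl : s = 0 := Multiset.eq_zero_of_forall_notMem fun b hb =>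
      hs0 (Multiset.sum_eq_zero_iff.1 hsn b hb ▸ hb)
    rw [polyaLaw, Measure.dirac_apply_of_mem (by simp [blockSizes])]
    simp [ewensFormula, ewensWeight]
  | succ n ih =>
    have hαn : 0 < α + n := by positivity
    have hE := ewensFormula_nonneg hα.le n s
    rw [polyaLaw_succ_blockSizes_preimage, polyaLaw_fresh_contribution hα G0 ih hs0 hsn,
      Finset.sum_congr rfl fun j hj => polyaLaw_join_contribution hα G0 ih hs0 hsn
        (Nat.pos_iff_ne_zero.1 (Finset.mem_Icc.1 hj).1),
      ← ENNReal.ofReal_sum_of_nonneg fun j _ => by positivity,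
      ← ENNReal.ofReal_add (by positivity) (Finset.sum_nonneg fun j _ => by positivity),
      ewensFormula_succ]
    congr 1
    have hcoeff : ((1 * s.count 1 : ℕ) : ℝ)
        + ∑ j ∈ Icc 1 n, (((j + 1) * s.count (j + 1) : ℕ) : ℝ) = n + 1 := by
      rw [one_mul]
      exact_mod_cast Multiset.count_one_add_sum_count_succ hs0 hsn
    rw [← Finset.sum_div, ← add_div, ← Finset.sum_mul, ← add_mul, hcoeff]
    ring

theorem ewens_sampling_formula_general
    (α : ℝ) (hα : 0 < α) (G0 : Measure ℝ) [IsProbabilityMeasure G0]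
    (hG0 : ∀ a : ℝ, G0 {a} = 0)
    (n : ℕ) (v : ℕ → ℕ)
    (hv : ∑ j ∈ Finset.Icc 1 n, j * v j = n) :
    polyaLaw α G0 n {x | ∀ j ∈ Finset.Icc 1 n, blocksOfSize x j = v j}
      = ENNReal.ofReal ((n.factorial : ℝ) / (∏ i ∈ Finset.range n, (α + i))
          * ∏ j ∈ Finset.Icc 1 n, α ^ (v j) / ((j : ℝ) ^ (v j) * (v j).factorial)) := by
  have : NullSingletonClass G0 := ⟨hG0⟩
  set s := ∑ j ∈ Icc 1 n, Multiset.replicate (v j) j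
  have hcount : ∀ j, s.count j = if j ∈ Icc 1 n then v j else 0 :=
    Multiset.count_finset_sum_replicate (Icc 1 n) v
  have hs0 : 0 ∉ s := Multiset.count_eq_zero.1 (by simp [hcount])
  have hsn : s.sum = n := by simpa [s, Multiset.sum_sum, mul_comm] using hv
  have hsub : s.toFinset ⊆ Icc 1 n := fun j hj => by
    rw [Multiset.mem_toFinset, ← Multiset.count_pos, hcount] at hj
    split_ifs at hj with h
    exacts [h, absurd hj (lt_irrefl 0)]
  rw [setOf_blocksOfSize_eq_preimage_blockSizes, polyaLaw_blockSizes_preimage hα G0 n hs0 hsn,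
    ewensFormula, ewensWeight_eq_prod_of_subset α hsub]
  congr 2
  refine Finset.prod_congr rfl fun j hj => ?_
  simp [hcount, hj]

/-- Ewens sampling formula for the partition induced by `n` draws
of the Pólya urn scheme with precision `α > 0` and atomless base distribution. -/
theorem ewens_sampling_formula
    (α : ℝ) (hα : 0 < α) (G0 : Measure ℝ) [IsProbabilityMeasure G0]
    (hG0 : ∀ a : ℝ, G0 {a} = 0)
    (n : ℕ) (hn : 1 ≤ n) (v : ℕ → ℕ)
    (hv : ∑ j ∈ Finset.Icc 1 n, j * v j = n) :
    polyaLaw α G0 n {x | ∀ j ∈ Finset.Icc 1 n, blocksOfSize x j = v j}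
      = ENNReal.ofReal ((n.factorial : ℝ) / (∏ i ∈ Finset.range n, (α + i))
          * ∏ j ∈ Finset.Icc 1 n, α ^ (v j) / ((j : ℝ) ^ (v j) * (v j).factorial)) :=
  ewens_sampling_formula_general α hα G0 hG0 n v hv
end

section
/- The Ewens sampling probabilities sum to one: for every $n \geq 1$ and $\alpha > 0$, $\sum_{v \in \Delta_n} \frac{n!}{\alpha(\alpha+1)\cdots(\alpha+n-1)} \prod_{j=1}^n \frac{\alpha^{v_j}}{j^{v_j} v_j!} = 1$, where $\Delta_n = \{v \in \mathbb{N}^n : \sum_{j=1}^n j v_j = n\}$. Equivalently, $\sum_{v \in \Delta_n} \prod_{j=1}^n \frac{(\alpha/j)^{v_j}}{v_j!} = \frac{\alpha(\alpha+1)\cdots(\alpha+n-1)}{n!}$. -/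
/-!
Let `S_m = ∑_{v ∈ Δ_m} ∏_j (α/j)^{v_j}/v_j!`, the coefficient of `t^m` in
`∏_j exp (α t^j / j)`; for `m ≤ n`, restricting the part sizes `j` to `1, …, n` changes
nothing. Weighting each summand by `m = ∑_j j v_j` and removing one part of size `j` turns
`j v_j (α/j)^{v_j}/v_j!` into `α (α/j)^{v_j-1}/(v_j-1)!`, whence `m S_m = α ∑_{k<m} S_k`.
The quotients `α(α+1)⋯(α+m-1)/m!` satisfy the same recurrence and also start at `1`.
-/

open Finset

namespace Ewens

variable {ι : Type*}

theorem sub_single_add_single [DecidableEq ι] {v : ι → ℕ} {i : ι} (hv : v i ≠ 0) :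
    v - Pi.single i 1 + Pi.single i 1 = v := by
  funext j
  rcases eq_or_ne j i with rfl | hj
  · simp only [Pi.add_apply, Pi.sub_apply, Pi.single_eq_same]
    omega
  · simp [Pi.single_eq_of_ne hj]

theorem mul_le_of_sum_mul_eq [Fintype ι] {w v : ι → ℕ} {m : ℕ} (hv : ∑ i, w i * v i = m)
    (i : ι) : w i * v i ≤ m :=
  hv ▸ single_le_sum (fun j _ => Nat.zero_le (w j * v j)) (mem_univ i)

variable [Fintype ι] [DecidableEq ι] {K : Type*} [Field K] [CharZero K]

def levelSet (w : ι → ℕ) (m : ℕ) : Finset (ι → ℕ) :=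
  {v ∈ Fintype.piFinset fun _ => range (m + 1) | ∑ i, w i * v i = m}

def expCoeff (c : ι → K) (v : ι → ℕ) : K :=
  ∏ i, c i ^ v i / (v i).factorial

def levelSum (w : ι → ℕ) (c : ι → K) (m : ℕ) : K :=
  ∑ v ∈ levelSet w m, expCoeff c v

variable {w : ι → ℕ}

section

variable {m : ℕ} {v : ι → ℕ}

theorem mem_levelSet (hw : ∀ i, 0 < w i) : v ∈ levelSet w m ↔ ∑ i, w i * v i = m := by
  simp only [levelSet, mem_filter, Fintype.mem_piFinset, mem_range, and_iff_right_iff_imp]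
  exact fun hv i => Nat.lt_succ_of_le <|
    (Nat.le_mul_of_pos_left _ (hw i)).trans (mul_le_of_sum_mul_eq hv i)

theorem levelSet_zero (hw : ∀ i, 0 < w i) : levelSet w 0 = {0} := by
  ext v
  simp [mem_levelSet hw, sum_eq_zero_iff, (hw _).ne', funext_iff]

theorem add_single_mem_levelSet (hw : ∀ i, 0 < w i) (i : ι) :
    v + Pi.single i 1 ∈ levelSet w (m + w i) ↔ v ∈ levelSet w m := by
  simp only [mem_levelSet hw, Pi.add_apply, mul_add, sum_add_distrib, Pi.single_apply, mul_ite,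
    mul_one, mul_zero, sum_ite_eq', mem_univ, if_true]
  omega

end

theorem expCoeff_add_single (c : ι → K) (v : ι → ℕ) (i : ι) :
    ((v i : K) + 1) * expCoeff c (v + Pi.single i 1) = c i * expCoeff c v := by
  have hrest : ∀ j ∈ ({i}ᶜ : Finset ι), (v + Pi.single i 1 : ι → ℕ) j = v j := by
    intro j hj
    rw [Pi.add_apply, Pi.single_eq_of_ne (by simpa using hj), add_zero]
  rw [expCoeff, expCoeff, Fintype.prod_eq_mul_prod_compl i, Fintype.prod_eq_mul_prod_compl i,
    prod_congr rfl fun j hj => by rw [hrest j hj], Pi.add_apply, Pi.single_eq_same,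
    Nat.factorial_succ, pow_succ]
  push_cast
  field_simp

theorem sum_coord_mul_expCoeff_levelSet_add (hw : ∀ i, 0 < w i) (c : ι → K) (i : ι)
    (m : ℕ) :
    ∑ v ∈ levelSet w (m + w i), (v i : K) * expCoeff c v = c i * levelSum w c m := by
  have hvanish (v : ι → ℕ) (hv : v i = 0) : (v i : K) * expCoeff c v = 0 := by
    rw [hv, Nat.cast_zero, zero_mul]
  rw [levelSum, mul_sum,
    ← sum_filter_of_ne (p := fun v => v i ≠ 0) fun v _ h hv => h (hvanish v hv)]
  refine sum_nbij' (· - Pi.single i 1) (· + Pi.single i 1) ?_ ?_ ?_ ?_ ?_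
  · intro v hv
    rw [mem_filter] at hv
    rw [← add_single_mem_levelSet hw i, sub_single_add_single hv.2]
    exact hv.1
  · intro u hu
    simp [add_single_mem_levelSet hw i, hu]
  · exact fun v hv => sub_single_add_single (mem_filter.1 hv).2
  · exact fun u _ => add_tsub_cancel_right u _
  · intro v hv
    have hvi := (mem_filter.1 hv).2
    have key := expCoeff_add_single c (v - Pi.single i 1) i
    rw [sub_single_add_single hvi] at key
    rw [← key, Pi.sub_apply, Pi.single_eq_same, Nat.cast_sub (Nat.one_le_iff_ne_zero.2 hvi),
      Nat.cast_one, sub_add_cancel]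

theorem sum_coord_mul_expCoeff_levelSet (hw : ∀ i, 0 < w i) (c : ι → K) (i : ι) (m : ℕ) :
    ∑ v ∈ levelSet w m, (v i : K) * expCoeff c v
      = if w i ≤ m then c i * levelSum w c (m - w i) else 0 := by
  split_ifs with hi
  · obtain ⟨k, rfl⟩ := Nat.exists_eq_add_of_le' hi
    rw [Nat.add_sub_cancel, sum_coord_mul_expCoeff_levelSet_add hw]
  · refine sum_eq_zero fun v hv => ?_
    have hvi : v i = 0 := by
      by_contra h
      exact hi <| (Nat.le_mul_of_pos_right _ (Nat.pos_of_ne_zero h)).trans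
        (mul_le_of_sum_mul_eq ((mem_levelSet hw).1 hv) i)
    rw [hvi, Nat.cast_zero, zero_mul]

theorem natCast_mul_levelSum (hw : ∀ i, 0 < w i) (c : ι → K) (m : ℕ) :
    (m : K) * levelSum w c m
      = ∑ i, if w i ≤ m then (w i : K) * c i * levelSum w c (m - w i) else 0 := by
  calc (m : K) * levelSum w c m
      = ∑ v ∈ levelSet w m, ∑ i, (w i : K) * ((v i : K) * expCoeff c v) := by
        rw [levelSum, mul_sum]
        refine sum_congr rfl fun v hv => ?_
        rw [← (mem_levelSet hw).1 hv]
        push_cast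
        simp_rw [sum_mul, mul_assoc]
    _ = ∑ i, (w i : K) * ∑ v ∈ levelSet w m, (v i : K) * expCoeff c v := by
        rw [sum_comm]
        simp_rw [mul_sum]
    _ = _ := by
        simp_rw [sum_coord_mul_expCoeff_levelSet hw, mul_ite, mul_zero, mul_assoc]

def ewensLevelSum (n : ℕ) (α : K) (m : ℕ) : K :=
  levelSum (fun j : Fin n => (j : ℕ) + 1) (fun j => α / ((j : ℕ) + 1)) m

theorem natCast_mul_ewensLevelSum {n m : ℕ} (hm : m ≤ n) (α : K) :
    (m : K) * ewensLevelSum n α m = α * ∑ k ∈ range m, ewensLevelSum n α k := by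
  have hwc (j : Fin n) : (((j : ℕ) + 1 : ℕ) : K) * (α / ((j : ℕ) + 1)) = α := by
    push_cast
    field_simp
  have hfilter : {j ∈ range n | j + 1 ≤ m} = range m := by
    ext j
    simp only [mem_filter, mem_range]
    omega
  rw [ewensLevelSum, natCast_mul_levelSum fun j : Fin n => Nat.add_one_pos (j : ℕ)]
  simp_rw [hwc, ← ewensLevelSum.eq_1]
  rw [Fin.sum_univ_eq_sum_range (fun j => if j + 1 ≤ m then α * ewensLevelSum n α (m - (j + 1))
    else 0), ← sum_filter, hfilter, ← mul_sum, ← sum_range_reflect]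
  refine congrArg _ (sum_congr rfl fun k hk => ?_)
  rw [mem_range] at hk
  congr 1
  omega

theorem mul_sum_prod_range_add_div_factorial (α : K) (m : ℕ) :
    α * ∑ k ∈ range m, (∏ i ∈ range k, (α + i)) / k.factorial
      = m * ((∏ i ∈ range m, (α + i)) / m.factorial) := by
  induction m with
  | zero => simp
  | succ m ih =>
    rw [sum_range_succ, mul_add, ih, prod_range_succ, Nat.factorial_succ]
    push_cast
    field_simp
    ring

theorem ewensLevelSum_eq {n m : ℕ} (hm : m ≤ n) (α : K) :
    ewensLevelSum n α m = (∏ i ∈ range m, (α + i)) / m.factorial := by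
  induction m using Nat.strong_induction_on with
  | _ m ih =>
    rcases Nat.eq_zero_or_pos m with rfl | hpos
    · simp [ewensLevelSum, levelSum, expCoeff,
        levelSet_zero fun j : Fin n => Nat.add_one_pos (j : ℕ)]
    · refine mul_left_cancel₀ (Nat.cast_ne_zero.2 hpos.ne' : (m : K) ≠ 0) ?_
      rw [natCast_mul_ewensLevelSum hm, ← mul_sum_prod_range_add_div_factorial,
        sum_congr rfl fun k hk => ih k (mem_range.1 hk) ((mem_range.1 hk).le.trans hm)]

end Ewens

open Ewens

theorem ewens_sum_to_one_general (n : ℕ) (α : ℝ) :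
    ∑' v : {v : Fin n → ℕ // ∑ j : Fin n, ((j : ℕ) + 1) * v j = n},
        ∏ j : Fin n, (α / ((j : ℕ) + 1)) ^ (v.1 j) / ((v.1 j).factorial : ℝ)
      = (∏ i ∈ Finset.range n, (α + i)) / (n.factorial : ℝ) := by
  have hset : {v : Fin n → ℕ | ∑ j : Fin n, ((j : ℕ) + 1) * v j = n}
      = ↑(levelSet (fun j : Fin n => (j : ℕ) + 1) n) := by
    ext v
    simp [mem_levelSet fun j : Fin n => Nat.add_one_pos (j : ℕ)]
  rw [← ewensLevelSum_eq le_rfl, ewensLevelSum, levelSum, ← Finset.tsum_subtype', ← hset]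
  rfl

/-- the Ewens sampling probabilities sum to one; equivalently
`∑_{v ∈ Δ_n} ∏_{j=1}^n (α/j)^{v_j}/v_j! = α(α+1)⋯(α+n-1)/n!`, where
`Δ_n = {v ∈ ℕ^n : ∑ j·v_j = n}` (indices `j = 1,…,n` encoded as `j.val + 1`). -/
theorem ewens_sum_to_one (n : ℕ) (hn : 1 ≤ n) (α : ℝ) (hα : 0 < α) :
    ∑' v : {v : Fin n → ℕ // ∑ j : Fin n, ((j : ℕ) + 1) * v j = n},
        ∏ j : Fin n, (α / ((j : ℕ) + 1)) ^ (v.1 j) / ((v.1 j).factorial : ℝ)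
      = (∏ i ∈ Finset.range n, (α + i)) / (n.factorial : ℝ) :=
  ewens_sum_to_one_general n α
end

section
/- Exchangeability from the Pólya urn: the sequence $(X_i)$ generated by the generalized Pólya urn scheme with precision $\alpha > 0$ and base distribution $G_0$ is exchangeable; i.e., for every $n$ and every permutation $\pi$ of $\{1,\dots,n\}$, $(X_1,\dots,X_n) \stackrel{d}{=} (X_{\pi(1)},\dots,X_{\pi(n)})$. -/
open MeasureTheory ProbabilityTheory

/-!
The permutations leaving the law of the first `n` draws invariant form a submonoid, and for any
fixed coordinate `c` the transpositions `(a c)` generate the symmetric group. Taking `c` to be the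
second-to-last coordinate, two kinds of swaps remain. A swap within the first `n - 1` coordinates
is handled by induction, because the predictive law of the next draw is a symmetric function of
the past. The swap of the last two draws is the heart of the matter: after `m` draws with
predictive law `P`, observing `y` turns the predictive law into `c • P + d • δ_y` with
`c = (α + m)/(α + m + 1)` and `d = 1/(α + m + 1)`, so the conditional law of the next two draws
is `c • P ⊗ P + d • (P pushed to the diagonal)`, which is symmetric.
-/

open scoped ENNReal
open Equiv

namespace MeasureTheory.Measure

variable {α β γ : Type*} [MeasurableSpace α] [MeasurableSpace β] [MeasurableSpace γ]

instance instMeasurableConstSMul : MeasurableConstSMul ℝ≥0∞ (Measure α) where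
  measurable_const_smul c := measurable_of_measurable_coe _ fun _ hs =>
    (measurable_coe hs).const_mul c

variable {μ : Measure α} {κ η : α → Measure β}

lemma bind_add_right (hκ : Measurable κ) (hη : Measurable η) :
    μ.bind (fun a => κ a + η a) = μ.bind κ + μ.bind η := by
  ext s hs
  rw [bind_apply hs (by fun_prop), add_apply, bind_apply hs hκ.aemeasurable,
    bind_apply hs hη.aemeasurable]
  exact lintegral_add_left (measurable_measure.1 hκ s hs) _

lemma bind_smul_right (c : ℝ≥0∞) (hκ : Measurable κ) :
    μ.bind (fun a => c • κ a) = c • μ.bind κ := by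
  ext s hs
  rw [bind_apply hs (by fun_prop), smul_apply, bind_apply hs hκ.aemeasurable,
    smul_eq_mul, ← lintegral_const_mul c (measurable_measure.1 hκ s hs)]
  rfl

lemma map_bind (hκ : Measurable κ) {f : β → γ} (hf : Measurable f) :
    (μ.bind κ).map f = μ.bind fun a => (κ a).map f := by
  ext s hs
  rw [map_apply hf hs, bind_apply (hf hs) hκ.aemeasurable, bind_apply hs (by fun_prop)]
  simp_rw [map_apply hf hs]

lemma bind_map {ν : Measure γ} {g : γ → α} (hg : Measurable g) (hκ : Measurable κ) :
    (ν.map g).bind κ = ν.bind (κ ∘ g) := by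
  ext s hs
  rw [bind_apply hs hκ.aemeasurable, lintegral_map (measurable_measure.1 hκ s hs) hg,
    bind_apply hs (hκ.comp hg).aemeasurable]
  rfl

lemma map_prodMk_smul_add_smul_dirac (P : Measure β) (c d : ℝ≥0∞) (y : β) :
    (c • P + d • dirac y).map (Prod.mk y) = c • P.map (Prod.mk y) + d • dirac (y, y) := by
  rw [Measure.map_add _ _ measurable_prodMk_left, Measure.map_smul, Measure.map_smul,
    map_dirac' measurable_prodMk_left]

lemma map_swap_bind_smul_add_smul_dirac (P : Measure β) [SFinite P] (c d : ℝ≥0∞) :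
    (P.bind fun y => (c • P + d • dirac y).map (Prod.mk y)).map Prod.swap =
      P.bind fun y => (c • P + d • dirac y).map (Prod.mk y) := by
  have hdiag : Measurable fun y : β => (y, y) := by fun_prop
  have hprod : Measurable fun y : β => P.map (Prod.mk y) := Measurable.map_prodMk_left
  simp_rw [map_prodMk_smul_add_smul_dirac]
  rw [bind_add_right (by fun_prop) (by fun_prop), bind_smul_right c hprod,
    bind_smul_right d (by fun_prop), ← prod_def, bind_dirac_eq_map _ hdiag,
    Measure.map_add _ _ measurable_swap, Measure.map_smul, Measure.map_smul, prod_swap,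
    map_map measurable_swap hdiag]
  rfl

def permStabilizer {ι : Type*} (μ : Measure (ι → β)) : Submonoid (Perm ι) where
  carrier := {σ | μ.map (· ∘ σ) = μ}
  one_mem' := map_id
  mul_mem' {σ τ} hσ hτ := by
    change μ.map ((· ∘ τ) ∘ (· ∘ σ)) = μ
    rw [← map_map (by fun_prop) (by fun_prop), hσ, hτ]

lemma mem_permStabilizer {ι : Type*} {μ : Measure (ι → β)} {σ : Perm ι} :
    σ ∈ μ.permStabilizer ↔ μ.map (· ∘ σ) = μ :=
  Iff.rfl

end MeasureTheory.Measure

lemma ProbabilityTheory.Kernel.measurable_map_prodMk {α β γ : Type*} [MeasurableSpace α]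
    [MeasurableSpace β] [MeasurableSpace γ] (κ : Kernel α β) [IsSFiniteKernel κ]
    {f : α × β → γ} (hf : Measurable f) : Measurable fun a => (κ a).map fun b => f (a, b) :=
  Measure.measurable_of_measurable_coe _ fun s hs => by
    have h a : (κ a).map (fun b => f (a, b)) s = κ a (Prod.mk a ⁻¹' (f ⁻¹' s)) :=
      Measure.map_apply (hf.comp measurable_prodMk_left) hs
    simp_rw [h]
    exact measurable_kernel_prodMk_left (hf hs)

lemma Equiv.Perm.submonoid_eq_top_of_forall_swap_mem {α : Type*} [DecidableEq α] [Finite α]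
    (M : Submonoid (Perm α)) (c : α) (h : ∀ a, swap a c ∈ M) : M = ⊤ := by
  rw [eq_top_iff, ← mclosure_isSwap, Submonoid.closure_le]
  rintro _ ⟨a, b, -, rfl⟩
  exact SubmonoidClass.swap_mem_trans M (h a) (swap_comm b c ▸ h b)

namespace Fin

variable {β : Type*} {n : ℕ}

lemma snoc_comp_swap_castSucc (x : Fin n → β) (y : β) (a b : Fin n) :
    (snoc x y : Fin (n + 1) → β) ∘ swap a.castSucc b.castSucc = snoc (x ∘ swap a b) y := by
  funext i
  cases i using lastCases with
  | last => simp [swap_apply_of_ne_of_ne (castSucc_lt_last a).ne' (castSucc_lt_last b).ne']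
  | cast j => simp [(castSucc_injective n).swap_apply]

lemma snoc_snoc_comp_swap (x : Fin n → β) (y z : β) :
    (snoc (snoc x y) z : Fin (n + 2) → β) ∘ swap (last n).castSucc (last (n + 1)) =
      snoc (snoc x z) y := by
  funext i
  cases i using lastCases with
  | last => simp
  | cast j =>
    cases j using lastCases with
    | last => simp
    | cast k =>
      simp [swap_apply_of_ne_of_ne ((castSucc_injective _).ne (castSucc_lt_last k).ne)
        (castSucc_lt_last _).ne]

end Fin

lemma measurable_polyaStep (α : ℝ) (G0 : Measure ℝ) (n : ℕ) :
    Measurable (polyaStep α G0 (n := n)) := by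
  unfold polyaStep
  fun_prop

noncomputable def polyaKernel (α : ℝ) (G0 : Measure ℝ) (n : ℕ) : Kernel (Fin n → ℝ) ℝ :=
  ⟨polyaStep α G0, measurable_polyaStep α G0 n⟩

noncomputable def polyaNext (α : ℝ) (G0 : Measure ℝ) {n : ℕ} (x : Fin n → ℝ) :
    Measure (Fin (n + 1) → ℝ) :=
  (polyaStep α G0 x).map (Fin.snoc x)

section Polya

variable {α : ℝ} {G0 : Measure ℝ} {n : ℕ}

instance [IsFiniteMeasure G0] : IsFiniteKernel (polyaKernel α G0 n) :=
  ⟨⟨ENNReal.ofReal (α / (α + n)) * G0 Set.univ + ENNReal.ofReal (1 / (α + n)) * n,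
    by finiteness, fun x => by simp [polyaKernel, polyaStep]⟩⟩

instance [IsFiniteMeasure G0] (x : Fin n → ℝ) : IsFiniteMeasure (polyaStep α G0 x) :=
  inferInstanceAs (IsFiniteMeasure (polyaKernel α G0 n x))

lemma polyaLaw_succ : polyaLaw α G0 (n + 1) = (polyaLaw α G0 n).bind (polyaNext α G0) := rfl

lemma measurable_polyaNext [IsFiniteMeasure G0] : Measurable (polyaNext α G0 (n := n)) :=
  (polyaKernel α G0 n).measurable_map_prodMk
    (f := fun p : (Fin n → ℝ) × ℝ => (Fin.snoc p.1 p.2 : Fin (n + 1) → ℝ)) (by fun_prop)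

lemma polyaStep_comp_perm (x : Fin n → ℝ) (σ : Perm (Fin n)) :
    polyaStep α G0 (x ∘ σ) = polyaStep α G0 x := by
  simp only [polyaStep, Function.comp_apply, Equiv.sum_comp σ fun i => Measure.dirac (x i)]

lemma polyaStep_snoc (hα : 0 < α) (x : Fin n → ℝ) (y : ℝ) :
    polyaStep α G0 (Fin.snoc x y : Fin (n + 1) → ℝ) =
      ENNReal.ofReal ((α + n) / (α + n + 1)) • polyaStep α G0 x
        + ENNReal.ofReal (1 / (α + n + 1)) • Measure.dirac y := by
  simp only [polyaStep, Fin.sum_univ_castSucc, Fin.snoc_castSucc, Fin.snoc_last, smul_add,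
    smul_smul, Nat.cast_add, Nat.cast_one, add_assoc]
  congr 3 <;> rw [← ENNReal.ofReal_mul (by positivity)] <;> congr 1 <;> field_simp

lemma mem_permStabilizer_polyaLaw_succ [IsFiniteMeasure G0] {σ : Perm (Fin n)}
    {τ : Perm (Fin (n + 1))}
    (hστ : ∀ x y, (Fin.snoc x y : Fin (n + 1) → ℝ) ∘ τ = Fin.snoc (x ∘ σ) y)
    (hσ : σ ∈ (polyaLaw α G0 n).permStabilizer) :
    τ ∈ (polyaLaw α G0 (n + 1)).permStabilizer := by
  rw [Measure.mem_permStabilizer] at hσ ⊢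
  have hnext (x : Fin n → ℝ) : (polyaNext α G0 x).map (· ∘ τ) = polyaNext α G0 (x ∘ σ) := by
    rw [polyaNext, polyaNext, Measure.map_map (by fun_prop) (by fun_prop), polyaStep_comp_perm]
    exact congrArg (fun f => Measure.map f (polyaStep α G0 x)) (funext (hστ x))
  calc (polyaLaw α G0 (n + 1)).map (· ∘ τ)
      = (polyaLaw α G0 n).bind fun x => polyaNext α G0 (x ∘ σ) := by
        rw [polyaLaw_succ, Measure.map_bind measurable_polyaNext (by fun_prop)]
        simp_rw [hnext]
    _ = ((polyaLaw α G0 n).map (· ∘ σ)).bind (polyaNext α G0) :=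
        (Measure.bind_map (by fun_prop) measurable_polyaNext).symm
    _ = polyaLaw α G0 (n + 1) := by rw [hσ, polyaLaw_succ]

lemma polyaNext_bind_polyaNext [IsFiniteMeasure G0] (hα : 0 < α) (x : Fin n → ℝ) :
    (polyaNext α G0 x).bind (polyaNext α G0) =
      ((polyaStep α G0 x).bind fun y => (ENNReal.ofReal ((α + n) / (α + n + 1)) • polyaStep α G0 x
        + ENNReal.ofReal (1 / (α + n + 1)) • Measure.dirac y).map (Prod.mk y)).map
          fun p => Fin.snoc (Fin.snoc x p.1) p.2 := by
  have hprod : Measurable fun y : ℝ => (polyaStep α G0 x).map (Prod.mk y) :=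
    Measurable.map_prodMk_left
  simp_rw [Measure.map_prodMk_smul_add_smul_dirac]
  rw [Measure.map_bind (by fun_prop) (by fun_prop), polyaNext,
    Measure.bind_map (by fun_prop) measurable_polyaNext]
  congr 1
  funext y
  rw [Function.comp_apply, polyaNext, polyaStep_snoc hα,
    ← Measure.map_prodMk_smul_add_smul_dirac, Measure.map_map (by fun_prop) measurable_prodMk_left]
  rfl

lemma swap_mem_permStabilizer_polyaLaw [IsFiniteMeasure G0] (hα : 0 < α) (k : ℕ) :
    swap (Fin.last k).castSucc (Fin.last (k + 1)) ∈ (polyaLaw α G0 (k + 2)).permStabilizer := by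
  set g : (Fin k → ℝ) → ℝ × ℝ → (Fin (k + 2) → ℝ) := fun x p => Fin.snoc (Fin.snoc x p.1) p.2
  have hg (x : Fin k → ℝ) : Measurable (g x) := by fun_prop
  have hswap (x : Fin k → ℝ) :
      (· ∘ swap (Fin.last k).castSucc (Fin.last (k + 1))) ∘ g x = g x ∘ Prod.swap :=
    funext fun p => Fin.snoc_snoc_comp_swap x p.1 p.2
  have htwo : Measurable fun x : Fin k → ℝ => (polyaNext α G0 x).bind (polyaNext α G0) :=
    (Measure.measurable_bind' measurable_polyaNext).comp measurable_polyaNext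
  rw [Measure.mem_permStabilizer, polyaLaw_succ, polyaLaw_succ,
    Measure.bind_bind measurable_polyaNext.aemeasurable measurable_polyaNext.aemeasurable,
    Measure.map_bind htwo (by fun_prop)]
  congr 1
  funext x
  rw [polyaNext_bind_polyaNext hα, Measure.map_map (by fun_prop) (hg x), hswap,
    ← Measure.map_map (hg x) measurable_swap, Measure.map_swap_bind_smul_add_smul_dirac]

lemma permStabilizer_polyaLaw_eq_top [IsFiniteMeasure G0] (hα : 0 < α) (n : ℕ) :
    (polyaLaw α G0 n).permStabilizer = ⊤ := by
  induction n with
  | zero => exact Subsingleton.elim _ _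
  | succ n ih =>
    obtain _ | k := n
    · exact Subsingleton.elim (α := Submonoid (Perm (Fin 1))) _ _
    refine Perm.submonoid_eq_top_of_forall_swap_mem (polyaLaw α G0 (k + 2)).permStabilizer
      (Fin.last k).castSucc fun a => ?_
    cases a using Fin.lastCases with
    | last => rw [swap_comm]; exact swap_mem_permStabilizer_polyaLaw hα k
    | cast i =>
      exact mem_permStabilizer_polyaLaw_succ (Fin.snoc_comp_swap_castSucc · · i (Fin.last k))
        (ih ▸ Submonoid.mem_top _)

end Polya

/-- exchangeability of the Pólya urn sequence. For every `n` and
every permutation `π` of `{1,…,n}`, `(X_{π(1)},…,X_{π(n)})` has the same law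
as `(X_1,…,X_n)`. -/
theorem polya_exchangeable
    (α : ℝ) (hα : 0 < α) (G0 : Measure ℝ) [IsProbabilityMeasure G0]
    (n : ℕ) (π : Equiv.Perm (Fin n)) :
    (polyaLaw α G0 n).map (fun x => x ∘ π) = polyaLaw α G0 n := by
  rw [← Measure.mem_permStabilizer, permStabilizer_polyaLaw_eq_top hα]
  exact Submonoid.mem_top π
end
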